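/- If (A, α) is a right H-Galois object for a Hopf algebra H, then the Miyashita–Ulbrich action a ◁ h = h^[1] a h^[2] makes A a right H-module algebra: (ab) ◁ h = (a ◁ h₍₁₎)(b ◁ h₍₂₎), 1 ◁ h = ε(h)1, and a ◁ (hk) = (a ◁ h) ◁ k. -/

import Mathlib

open TensorProduct

set_option synthInstance.maxHeartbeats 1000000
set_option maxHeartbeats 1000000
noncomputable section

variable {H A : Type} [Ring H] [HopfAlgebra ℂ H] [Ring A] [Algebra ℂ A]

/-- The canonical Galois map `A ⊗ A → A ⊗ H`, `x ⊗ y ↦ (x⊗1)α(y) = ∑ x·y₍₀₎ ⊗ y₍₁₎`. -/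
def canMap (α : A →ₗ[ℂ] A ⊗[ℂ] H) : A ⊗[ℂ] A →ₗ[ℂ] A ⊗[ℂ] H :=
  TensorProduct.map (LinearMap.mul' ℂ A) LinearMap.id ∘ₗ
    (TensorProduct.assoc ℂ A A H).symm.toLinearMap ∘ₗ TensorProduct.map LinearMap.id α

/-- The translation map `h ↦ h^[1] ⊗ h^[2] = can⁻¹(1 ⊗ h)`. -/
def translationMap (e : (A ⊗[ℂ] A) ≃ₗ[ℂ] (A ⊗[ℂ] H)) : H →ₗ[ℂ] A ⊗[ℂ] A :=
  e.symm.toLinearMap ∘ₗ (TensorProduct.mk ℂ A H) 1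

/-- The Miyashita–Ulbrich action `a ⊗ h ↦ h^[1] a h^[2]`. -/
def muAction (e : (A ⊗[ℂ] A) ≃ₗ[ℂ] (A ⊗[ℂ] H)) : A ⊗[ℂ] H →ₗ[ℂ] A :=
  LinearMap.mul' ℂ A ∘ₗ
    TensorProduct.map (LinearMap.mul' ℂ A) LinearMap.id ∘ₗ
    TensorProduct.map (TensorProduct.comm ℂ A A).toLinearMap LinearMap.id ∘ₗ
    (TensorProduct.assoc ℂ A A A).symm.toLinearMap ∘ₗ
    TensorProduct.map LinearMap.id (translationMap e)

/-- A right `H`-comodule algebra structure on `A` (pointfree formulation). -/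
structure IsComoduleAlgebra (α : A →ₗ[ℂ] A ⊗[ℂ] H) : Prop where
  coassoc : TensorProduct.map α LinearMap.id ∘ₗ α
    = (TensorProduct.assoc ℂ A H H).symm.toLinearMap ∘ₗ
        TensorProduct.map LinearMap.id Coalgebra.comul ∘ₗ α
  counital : (TensorProduct.rid ℂ A).toLinearMap ∘ₗ
      TensorProduct.map LinearMap.id Coalgebra.counit ∘ₗ α = LinearMap.id
  mul_hom : α ∘ₗ LinearMap.mul' ℂ A
    = TensorProduct.map (LinearMap.mul' ℂ A) (LinearMap.mul' ℂ H) ∘ₗ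
        (TensorProduct.tensorTensorTensorComm ℂ A H A H).toLinearMap ∘ₗ
        TensorProduct.map α α
  one_hom : α 1 = (1 : A) ⊗ₜ[ℂ] (1 : H)

lemma mulLeft_map (x : A) (v : A ⊗[ℂ] H) :
    (x ⊗ₜ[ℂ] (1:H)) * v = TensorProduct.map (LinearMap.mulLeft ℂ x) LinearMap.id v := by
  induction v using TensorProduct.induction_on with
  | zero => simp
  | tmul a h => simp [Algebra.TensorProduct.tmul_mul_tmul]
  | add u v hu hv => simp [mul_add, hu, hv]

lemma mulLeft_mapA (x : A) (u : A ⊗[ℂ] A) :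
    (x ⊗ₜ[ℂ] (1:A)) * u = TensorProduct.map (LinearMap.mulLeft ℂ x) LinearMap.id u := by
  induction u using TensorProduct.induction_on with
  | zero => simp
  | tmul a h => simp [Algebra.TensorProduct.tmul_mul_tmul]
  | add u v hu hv => simp [mul_add, hu, hv]

lemma mulRight_mapA (s : A) (u : A ⊗[ℂ] A) :
    u * ((1:A) ⊗ₜ[ℂ] s) = TensorProduct.map LinearMap.id (LinearMap.mulRight ℂ s) u := by
  induction u using TensorProduct.induction_on with
  | zero => simp
  | tmul a h => simp [Algebra.TensorProduct.tmul_mul_tmul]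
  | add u v hu hv => simp [add_mul, hu, hv]

lemma mulmul (v w : A ⊗[ℂ] H) :
    TensorProduct.map (LinearMap.mul' ℂ A) (LinearMap.mul' ℂ H)
      ((TensorProduct.tensorTensorTensorComm ℂ A H A H) (v ⊗ₜ w)) = v * w := by
  induction v using TensorProduct.induction_on with
  | zero => simp
  | tmul a h =>
    induction w using TensorProduct.induction_on with
    | zero => simp
    | tmul b k => simp [Algebra.TensorProduct.tmul_mul_tmul]
    | add u v hu hv => simp only [tmul_add, map_add, hu, hv, mul_add]
  | add u v hu hv => simp only [add_tmul, map_add, hu, hv, add_mul]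

lemma canMap_tmul (α : A →ₗ[ℂ] A ⊗[ℂ] H) (x y : A) :
    canMap α (x ⊗ₜ y) = (x ⊗ₜ[ℂ] (1:H)) * α y := by
  have key : ∀ v : A ⊗[ℂ] H,
      TensorProduct.map (LinearMap.mul' ℂ A) LinearMap.id
        ((TensorProduct.assoc ℂ A A H).symm (x ⊗ₜ v)) = (x ⊗ₜ[ℂ] (1:H)) * v := by
    intro v
    induction v using TensorProduct.induction_on with
    | zero => simp
    | tmul a h => simp [TensorProduct.assoc_symm_tmul, Algebra.TensorProduct.tmul_mul_tmul]
    | add u v hu hv => simp only [tmul_add, map_add, hu, hv, mul_add]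
  simpa [canMap] using key (α y)

lemma alpha_mul (α : A →ₗ[ℂ] A ⊗[ℂ] H) (hα : IsComoduleAlgebra α) (x y : A) : α (x * y) = α x * α y := by
  have := LinearMap.congr_fun hα.mul_hom (x ⊗ₜ y)
  simpa [mulmul] using this

lemma can_left (α : A →ₗ[ℂ] A ⊗[ℂ] H) (x : A) (u : A ⊗[ℂ] A) :
    canMap α ((x ⊗ₜ[ℂ] (1:A)) * u) = (x ⊗ₜ[ℂ] (1:H)) * canMap α u := by
  induction u using TensorProduct.induction_on with
  | zero => simp
  | tmul a b =>
    rw [Algebra.TensorProduct.tmul_mul_tmul, one_mul, canMap_tmul, canMap_tmul,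
      ← mul_assoc, Algebra.TensorProduct.tmul_mul_tmul, one_mul]
  | add u v hu hv => simp only [mul_add, map_add, hu, hv]

lemma can_right (α : A →ₗ[ℂ] A ⊗[ℂ] H) (hα : IsComoduleAlgebra α) (s : A) (u : A ⊗[ℂ] A) :
    canMap α (u * ((1:A) ⊗ₜ[ℂ] s)) = canMap α u * α s := by
  induction u using TensorProduct.induction_on with
  | zero => simp
  | tmul a b =>
    rw [Algebra.TensorProduct.tmul_mul_tmul, mul_one, canMap_tmul, canMap_tmul,
      alpha_mul α hα, mul_assoc]
  | add u v hu hv => simp only [add_mul, map_add, hu, hv, add_mul]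

lemma can_tau (α : A →ₗ[ℂ] A ⊗[ℂ] H) (e : (A ⊗[ℂ] A) ≃ₗ[ℂ] (A ⊗[ℂ] H)) (he : e.toLinearMap = canMap α) (h : H) : canMap α (translationMap e h) = (1:A) ⊗ₜ h := by
  rw [← he, translationMap]
  simp

lemma symm_tmul (α : A →ₗ[ℂ] A ⊗[ℂ] H) (e : (A ⊗[ℂ] A) ≃ₗ[ℂ] (A ⊗[ℂ] H)) (he : e.toLinearMap = canMap α) (x : A) (h : H) :
    e.symm (x ⊗ₜ h) = (x ⊗ₜ[ℂ] (1:A)) * translationMap e h := by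
  apply e.injective
  rw [e.apply_symm_apply]
  have : e ((x ⊗ₜ[ℂ] (1:A)) * translationMap e h)
      = canMap α ((x ⊗ₜ[ℂ] (1:A)) * translationMap e h) := by rw [← he]; rfl
  rw [this, can_left α, can_tau α e he, Algebra.TensorProduct.tmul_mul_tmul,
    mul_one, one_mul]

lemma seven (α : A →ₗ[ℂ] A ⊗[ℂ] H) (e : (A ⊗[ℂ] A) ≃ₗ[ℂ] (A ⊗[ℂ] H)) (he : e.toLinearMap = canMap α) (y : A) : e.symm (α y) = (1:A) ⊗ₜ y := by
  apply e.injective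
  rw [e.apply_symm_apply]
  have : e ((1:A) ⊗ₜ[ℂ] y) = canMap α ((1:A) ⊗ₜ[ℂ] y) := by rw [← he]; rfl
  rw [this, canMap_tmul, ← Algebra.TensorProduct.one_def, one_mul]

def sandwich (a : A) : A ⊗[ℂ] A →ₗ[ℂ] A :=
  LinearMap.mul' ℂ A ∘ₗ TensorProduct.map (LinearMap.mulRight ℂ a) LinearMap.id

lemma sandwich_tmul (a p q : A) : sandwich a (p ⊗ₜ q) = p * a * q := by
  simp [sandwich]

lemma muAction_tmul (e : (A ⊗[ℂ] A) ≃ₗ[ℂ] (A ⊗[ℂ] H)) (a : A) (h : H) :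
    muAction e (a ⊗ₜ h) = sandwich a (translationMap e h) := by
  have key : ∀ u : A ⊗[ℂ] A,
      LinearMap.mul' ℂ A
        (TensorProduct.map (LinearMap.mul' ℂ A) LinearMap.id
          (TensorProduct.map (TensorProduct.comm ℂ A A).toLinearMap LinearMap.id
            ((TensorProduct.assoc ℂ A A A).symm (a ⊗ₜ u)))) = sandwich a u := by
    intro u
    induction u using TensorProduct.induction_on with
    | zero => simp
    | tmul p q => simp [TensorProduct.assoc_symm_tmul, sandwich_tmul, mul_assoc]
    | add u v hu hv => simp only [tmul_add, map_add, hu, hv]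
  simpa [muAction] using key (translationMap e h)

lemma sandwich_add_left (a b : A) (u : A ⊗[ℂ] A) :
    sandwich (a + b) u = sandwich a u + sandwich b u := by
  induction u using TensorProduct.induction_on with
  | zero => simp
  | tmul p q => simp [sandwich_tmul, mul_add, add_mul]
  | add u v hu hv => simp only [map_add, hu, hv]; abel

lemma sandwich_zero_left (u : A ⊗[ℂ] A) : sandwich 0 u = 0 := by
  induction u using TensorProduct.induction_on with
  | zero => simp
  | tmul p q => simp [sandwich_tmul]
  | add u v hu hv => simp [hu, hv]

lemma sandwich_smul_left (c : ℂ) (a : A) (u : A ⊗[ℂ] A) :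
    sandwich (c • a) u = c • sandwich a u := by
  induction u using TensorProduct.induction_on with
  | zero => simp
  | tmul p q => simp [sandwich_tmul, mul_smul_comm, smul_mul_assoc]
  | add u v hu hv => simp [hu, hv]

lemma sandwich_left_mul (b x : A) (u : A ⊗[ℂ] A) :
    sandwich b ((x ⊗ₜ[ℂ] (1:A)) * u) = x * sandwich b u := by
  induction u using TensorProduct.induction_on with
  | zero => simp
  | tmul p q => simp [Algebra.TensorProduct.tmul_mul_tmul, sandwich_tmul, mul_assoc]
  | add u v hu hv => simp only [mul_add, map_add, hu, hv]

lemma sandwich_one (u : A ⊗[ℂ] A) : sandwich 1 u = LinearMap.mul' ℂ A u := by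
  induction u using TensorProduct.induction_on with
  | zero => simp
  | tmul p q => simp [sandwich_tmul]
  | add u v hu hv => simp [hu, hv]

lemma psi_can (α : A →ₗ[ℂ] A ⊗[ℂ] H) (hα : IsComoduleAlgebra α) (u : A ⊗[ℂ] A) :
    (TensorProduct.rid ℂ A)
        (TensorProduct.map LinearMap.id Coalgebra.counit (canMap α u))
      = LinearMap.mul' ℂ A u := by
  induction u using TensorProduct.induction_on with
  | zero => simp
  | tmul x y =>
    rw [canMap_tmul]
    have sub : ∀ v : A ⊗[ℂ] H,
        (TensorProduct.rid ℂ A)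
            (TensorProduct.map LinearMap.id Coalgebra.counit ((x ⊗ₜ[ℂ] (1:H)) * v))
          = x * (TensorProduct.rid ℂ A)
            (TensorProduct.map LinearMap.id Coalgebra.counit v) := by
      intro v
      induction v using TensorProduct.induction_on with
      | zero => simp
      | tmul a h =>
        simp [Algebra.TensorProduct.tmul_mul_tmul, TensorProduct.rid_tmul,
          mul_smul_comm]
      | add u v hu hv => simp only [mul_add, map_add, hu, hv]
    rw [sub]
    have := LinearMap.congr_fun hα.counital y
    simp only [LinearMap.coe_comp, Function.comp_apply, LinearEquiv.coe_coe,
      LinearMap.id_coe, id_eq] at this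
    rw [this, LinearMap.mul'_apply]
  | add u v hu hv => simp only [map_add, hu, hv]

def Wmap : (A ⊗[ℂ] A) ⊗[ℂ] (A ⊗[ℂ] A) →ₗ[ℂ] A ⊗[ℂ] A :=
  TensorProduct.map (LinearMap.mul' ℂ A) (LinearMap.mul' ℂ A) ∘ₗ
    TensorProduct.map (TensorProduct.comm ℂ A A).toLinearMap LinearMap.id ∘ₗ
    (TensorProduct.tensorTensorTensorComm ℂ A A A A).toLinearMap

lemma Wmap_tmul (u : A ⊗[ℂ] A) (r s : A) :
    Wmap (u ⊗ₜ (r ⊗ₜ s)) = (r ⊗ₜ[ℂ] (1:A)) * u * ((1:A) ⊗ₜ[ℂ] s) := by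
  induction u using TensorProduct.induction_on with
  | zero => simp [Wmap]
  | tmul p q =>
    simp [Wmap, TensorProduct.tensorTensorTensorComm_tmul,
      Algebra.TensorProduct.tmul_mul_tmul]
  | add u v hu hv =>
    simp only [add_tmul, map_add, hu, hv, mul_add, add_mul]

lemma can_W (α : A →ₗ[ℂ] A ⊗[ℂ] H) (hα : IsComoduleAlgebra α)
    (e : (A ⊗[ℂ] A) ≃ₗ[ℂ] (A ⊗[ℂ] H)) (he : e.toLinearMap = canMap α)
    (h : H) (v : A ⊗[ℂ] A) :
    canMap α (Wmap (translationMap e h ⊗ₜ v))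
      = ((1:A) ⊗ₜ[ℂ] h) * canMap α v := by
  induction v using TensorProduct.induction_on with
  | zero => simp
  | tmul r s =>
    rw [Wmap_tmul, can_right α hα, can_left α, can_tau α e he, canMap_tmul]
    rw [← mul_assoc]
    congr 1
    simp [Algebra.TensorProduct.tmul_mul_tmul]
  | add u v hu hv => simp only [tmul_add, map_add, hu, hv, mul_add]

lemma tau_mul (α : A →ₗ[ℂ] A ⊗[ℂ] H) (hα : IsComoduleAlgebra α)
    (e : (A ⊗[ℂ] A) ≃ₗ[ℂ] (A ⊗[ℂ] H)) (he : e.toLinearMap = canMap α)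
    (h k : H) :
    translationMap e (h * k) = Wmap (translationMap e h ⊗ₜ translationMap e k) := by
  apply e.injective
  have h1 : e (translationMap e (h * k)) = (1:A) ⊗ₜ[ℂ] (h * k) := by
    simp [translationMap]
  have h2 : e (Wmap (translationMap e h ⊗ₜ translationMap e k))
      = canMap α (Wmap (translationMap e h ⊗ₜ translationMap e k)) := by
    rw [← he]; rfl
  rw [h1, h2, can_W α hα e he, can_tau α e he, Algebra.TensorProduct.tmul_mul_tmul,
    one_mul]

lemma sandwich_W (a : A) (u v : A ⊗[ℂ] A) :
    sandwich a (Wmap (u ⊗ₜ v)) = sandwich (sandwich a u) v := by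
  induction u using TensorProduct.induction_on with
  | zero => simp [sandwich_zero_left]
  | tmul p q =>
    induction v using TensorProduct.induction_on with
    | zero => simp
    | tmul r s =>
      rw [Wmap_tmul, Algebra.TensorProduct.tmul_mul_tmul,
        Algebra.TensorProduct.tmul_mul_tmul, sandwich_tmul, sandwich_tmul,
        sandwich_tmul]
      simp [mul_assoc]
    | add v w hv hw => simp only [tmul_add, map_add, hv, hw]
  | add u w hu hw =>
    simp only [add_tmul, map_add, hu, hw, sandwich_add_left]

lemma L1 (α : A →ₗ[ℂ] A ⊗[ℂ] H) (x : A) (v : A ⊗[ℂ] H) :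
    TensorProduct.map (canMap α) LinearMap.id ((TensorProduct.assoc ℂ A A H).symm (x ⊗ₜ v))
      = TensorProduct.map
          (TensorProduct.map (LinearMap.mulLeft ℂ x) LinearMap.id ∘ₗ α) LinearMap.id v := by
  induction v using TensorProduct.induction_on with
  | zero => simp
  | tmul a h =>
    rw [TensorProduct.assoc_symm_tmul]
    simp only [TensorProduct.map_tmul, LinearMap.id_coe, id_eq, LinearMap.coe_comp,
      Function.comp_apply]
    rw [canMap_tmul, mulLeft_map]
  | add u v hu hv => simp only [tmul_add, map_add, hu, hv]

lemma L3 (x a : A) (w : H ⊗[ℂ] H) :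
    (TensorProduct.assoc ℂ A H H).symm ((x * a) ⊗ₜ w)
      = TensorProduct.map (TensorProduct.map (LinearMap.mulLeft ℂ x) LinearMap.id)
          LinearMap.id ((TensorProduct.assoc ℂ A H H).symm (a ⊗ₜ w)) := by
  induction w using TensorProduct.induction_on with
  | zero => simp
  | tmul h k => simp [TensorProduct.assoc_symm_tmul]
  | add u v hu hv => simp only [tmul_add, map_add, hu, hv]

lemma L2 (x : A) (v : A ⊗[ℂ] H) :
    (TensorProduct.assoc ℂ A H H).symm
        (TensorProduct.map LinearMap.id Coalgebra.comul ((x ⊗ₜ[ℂ] (1:H)) * v))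
      = TensorProduct.map (TensorProduct.map (LinearMap.mulLeft ℂ x) LinearMap.id)
          LinearMap.id
          ((TensorProduct.assoc ℂ A H H).symm
            (TensorProduct.map LinearMap.id Coalgebra.comul v)) := by
  induction v using TensorProduct.induction_on with
  | zero => simp
  | tmul a h =>
    rw [Algebra.TensorProduct.tmul_mul_tmul, one_mul]
    simp only [TensorProduct.map_tmul, LinearMap.id_coe, id_eq]
    exact L3 x a _
  | add u v hu hv => simp only [mul_add, map_add, hu, hv]

lemma threeMaps (α : A →ₗ[ℂ] A ⊗[ℂ] H) (hα : IsComoduleAlgebra α) (u : A ⊗[ℂ] A) :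
    TensorProduct.map (canMap α) LinearMap.id
        ((TensorProduct.assoc ℂ A A H).symm (TensorProduct.map LinearMap.id α u))
      = (TensorProduct.assoc ℂ A H H).symm
          (TensorProduct.map LinearMap.id Coalgebra.comul (canMap α u)) := by
  induction u using TensorProduct.induction_on with
  | zero => simp
  | tmul x y =>
    have coas : TensorProduct.map α LinearMap.id (α y)
        = (TensorProduct.assoc ℂ A H H).symm
            (TensorProduct.map LinearMap.id Coalgebra.comul (α y)) := by
      have := LinearMap.congr_fun hα.coassoc y
      simpa using this
    calc TensorProduct.map (canMap α) LinearMap.id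
            ((TensorProduct.assoc ℂ A A H).symm
              (TensorProduct.map LinearMap.id α (x ⊗ₜ y)))
        = TensorProduct.map
            (TensorProduct.map (LinearMap.mulLeft ℂ x) LinearMap.id ∘ₗ α)
            LinearMap.id (α y) := by
          simp only [TensorProduct.map_tmul, LinearMap.id_coe, id_eq]
          exact L1 α x (α y)
      _ = TensorProduct.map (TensorProduct.map (LinearMap.mulLeft ℂ x) LinearMap.id)
            LinearMap.id (TensorProduct.map α LinearMap.id (α y)) := by
          have h2 := TensorProduct.map_comp
            (f₂ := TensorProduct.map (LinearMap.mulLeft ℂ x) (LinearMap.id (R := ℂ) (M := H))) (f₁ := α)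
            (g₂ := LinearMap.id (R := ℂ) (M := H)) (g₁ := LinearMap.id (R := ℂ) (M := H))
          simpa using LinearMap.congr_fun h2 (α y)
      _ = TensorProduct.map (TensorProduct.map (LinearMap.mulLeft ℂ x) LinearMap.id)
            LinearMap.id ((TensorProduct.assoc ℂ A H H).symm
              (TensorProduct.map LinearMap.id Coalgebra.comul (α y))) := by rw [coas]
      _ = (TensorProduct.assoc ℂ A H H).symm
            (TensorProduct.map LinearMap.id Coalgebra.comul ((x ⊗ₜ[ℂ] (1:H)) * α y)) := by
          rw [L2]
      _ = (TensorProduct.assoc ℂ A H H).symm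
            (TensorProduct.map LinearMap.id Coalgebra.comul (canMap α (x ⊗ₜ y))) := by
          rw [canMap_tmul]
  | add u v hu hv => simp only [map_add, hu, hv]

lemma cancel_can (α : A →ₗ[ℂ] A ⊗[ℂ] H)
    (e : (A ⊗[ℂ] A) ≃ₗ[ℂ] (A ⊗[ℂ] H)) (he : e.toLinearMap = canMap α)
    (X : (A ⊗[ℂ] A) ⊗[ℂ] H) :
    TensorProduct.map e.symm.toLinearMap LinearMap.id
        (TensorProduct.map (canMap α) LinearMap.id X) = X := by
  induction X using TensorProduct.induction_on with
  | zero => simp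
  | tmul u k =>
    simp only [TensorProduct.map_tmul, LinearMap.id_coe, id_eq]
    rw [← he]
    simp
  | add u v hu hv => simp only [map_add, hu, hv]

lemma star_id (α : A →ₗ[ℂ] A ⊗[ℂ] H) (hα : IsComoduleAlgebra α)
    (e : (A ⊗[ℂ] A) ≃ₗ[ℂ] (A ⊗[ℂ] H)) (he : e.toLinearMap = canMap α) (h : H) :
    (TensorProduct.assoc ℂ A A H).symm
        (TensorProduct.map LinearMap.id α (translationMap e h))
      = TensorProduct.map e.symm.toLinearMap LinearMap.id
          ((TensorProduct.assoc ℂ A H H).symm ((1:A) ⊗ₜ Coalgebra.comul h)) := by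
  have t3 := threeMaps α hα (translationMap e h)
  rw [can_tau α e he] at t3
  have : TensorProduct.map LinearMap.id Coalgebra.comul ((1:A) ⊗ₜ[ℂ] h)
      = (1:A) ⊗ₜ Coalgebra.comul h := by simp
  rw [this] at t3
  calc (TensorProduct.assoc ℂ A A H).symm
        (TensorProduct.map LinearMap.id α (translationMap e h))
      = TensorProduct.map e.symm.toLinearMap LinearMap.id
          (TensorProduct.map (canMap α) LinearMap.id
            ((TensorProduct.assoc ℂ A A H).symm
              (TensorProduct.map LinearMap.id α (translationMap e h)))) := by
        rw [cancel_can α e he]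
    _ = TensorProduct.map e.symm.toLinearMap LinearMap.id
          ((TensorProduct.assoc ℂ A H H).symm ((1:A) ⊗ₜ Coalgebra.comul h)) := by
        rw [t3]

lemma tau_map (e : (A ⊗[ℂ] A) ≃ₗ[ℂ] (A ⊗[ℂ] H)) (w : H ⊗[ℂ] H) :
    TensorProduct.map (translationMap e) LinearMap.id w
      = TensorProduct.map e.symm.toLinearMap LinearMap.id
          ((TensorProduct.assoc ℂ A H H).symm ((1:A) ⊗ₜ w)) := by
  induction w using TensorProduct.induction_on with
  | zero => simp
  | tmul h k => simp [TensorProduct.assoc_symm_tmul, translationMap]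
  | add u v hu hv => simp only [tmul_add, map_add, hu, hv]

lemma eight (α : A →ₗ[ℂ] A ⊗[ℂ] H) (hα : IsComoduleAlgebra α)
    (e : (A ⊗[ℂ] A) ≃ₗ[ℂ] (A ⊗[ℂ] H)) (he : e.toLinearMap = canMap α) (h : H) :
    TensorProduct.map (translationMap e) LinearMap.id (Coalgebra.comul h)
      = (TensorProduct.assoc ℂ A A H).symm
          (TensorProduct.map LinearMap.id α (translationMap e h)) :=
  (tau_map e _).trans (star_id α hα e he h).symm

lemma Dlem (α : A →ₗ[ℂ] A ⊗[ℂ] H) (hα : IsComoduleAlgebra α)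
    (e : (A ⊗[ℂ] A) ≃ₗ[ℂ] (A ⊗[ℂ] H)) (he : e.toLinearMap = canMap α)
    (b : A) (v : A ⊗[ℂ] H) :
    LinearMap.mul' ℂ A
        (TensorProduct.map LinearMap.id (muAction e ∘ₗ (TensorProduct.mk ℂ A H) b) v)
      = sandwich b (e.symm v) := by
  induction v using TensorProduct.induction_on with
  | zero => simp
  | tmul x k =>
    simp only [TensorProduct.map_tmul, LinearMap.id_coe, id_eq, LinearMap.coe_comp,
      Function.comp_apply, TensorProduct.mk_apply, LinearMap.mul'_apply]
    rw [muAction_tmul, symm_tmul α e he, sandwich_left_mul]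
  | add u v hu hv => simp only [map_add, hu, hv]

lemma D_alpha (α : A →ₗ[ℂ] A ⊗[ℂ] H) (hα : IsComoduleAlgebra α)
    (e : (A ⊗[ℂ] A) ≃ₗ[ℂ] (A ⊗[ℂ] H)) (he : e.toLinearMap = canMap α)
    (b q : A) :
    LinearMap.mul' ℂ A
        (TensorProduct.map LinearMap.id (muAction e ∘ₗ (TensorProduct.mk ℂ A H) b) (α q))
      = b * q := by
  rw [Dlem α hα e he, seven α e he, sandwich_tmul, one_mul]

def Theta (e : (A ⊗[ℂ] A) ≃ₗ[ℂ] (A ⊗[ℂ] H)) (a b : A) :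
    (A ⊗[ℂ] A) ⊗[ℂ] H →ₗ[ℂ] A :=
  LinearMap.mul' ℂ A ∘ₗ
    TensorProduct.map (sandwich a) (muAction e ∘ₗ (TensorProduct.mk ℂ A H) b)

lemma Theta_tmul (e : (A ⊗[ℂ] A) ≃ₗ[ℂ] (A ⊗[ℂ] H)) (a b : A)
    (u : A ⊗[ℂ] A) (k : H) :
    Theta e a b (u ⊗ₜ k) = sandwich a u * muAction e (b ⊗ₜ k) := by
  simp [Theta]

lemma rhs_lem (e : (A ⊗[ℂ] A) ≃ₗ[ℂ] (A ⊗[ℂ] H)) (a b : A) (w : H ⊗[ℂ] H) :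
    LinearMap.mul' ℂ A
        (TensorProduct.map (muAction e) (muAction e)
          ((TensorProduct.tensorTensorTensorComm ℂ A A H H) ((a ⊗ₜ b) ⊗ₜ w)))
      = Theta e a b (TensorProduct.map (translationMap e) LinearMap.id w) := by
  induction w using TensorProduct.induction_on with
  | zero => simp
  | tmul h k =>
    rw [TensorProduct.tensorTensorTensorComm_tmul]
    simp only [TensorProduct.map_tmul, LinearMap.id_coe, id_eq, LinearMap.mul'_apply]
    rw [Theta_tmul, muAction_tmul]
  | add u v hu hv => simp only [tmul_add, map_add, hu, hv]

lemma Theta_inner (e : (A ⊗[ℂ] A) ≃ₗ[ℂ] (A ⊗[ℂ] H)) (a b p : A) (v : A ⊗[ℂ] H) :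
    Theta e a b ((TensorProduct.assoc ℂ A A H).symm (p ⊗ₜ v))
      = p * a * LinearMap.mul' ℂ A
          (TensorProduct.map LinearMap.id (muAction e ∘ₗ (TensorProduct.mk ℂ A H) b) v) := by
  induction v using TensorProduct.induction_on with
  | zero => simp
  | tmul c k =>
    rw [TensorProduct.assoc_symm_tmul, Theta_tmul, sandwich_tmul]
    simp only [TensorProduct.map_tmul, LinearMap.id_coe, id_eq, LinearMap.coe_comp,
      Function.comp_apply, TensorProduct.mk_apply, LinearMap.mul'_apply]
    rw [mul_assoc (p * a) c]
  | add u v hu hv => simp only [tmul_add, map_add, hu, hv, mul_add]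

lemma Theta_star (α : A →ₗ[ℂ] A ⊗[ℂ] H) (hα : IsComoduleAlgebra α)
    (e : (A ⊗[ℂ] A) ≃ₗ[ℂ] (A ⊗[ℂ] H)) (he : e.toLinearMap = canMap α)
    (a b : A) (u : A ⊗[ℂ] A) :
    Theta e a b ((TensorProduct.assoc ℂ A A H).symm
        (TensorProduct.map LinearMap.id α u))
      = sandwich (a * b) u := by
  induction u using TensorProduct.induction_on with
  | zero => simp
  | tmul p q =>
    simp only [TensorProduct.map_tmul, LinearMap.id_coe, id_eq]
    rw [Theta_inner, D_alpha α hα e he, sandwich_tmul, mul_assoc, mul_assoc, mul_assoc]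
  | add u v hu hv => simp only [map_add, hu, hv]

/-- If `(A, α)` is a right `H`-Galois object for a Hopf algebra `H`, then the
Miyashita–Ulbrich action `a ◁ h = h^[1] a h^[2]` makes `A` a right `H`-module algebra:
`(ab) ◁ h = (a ◁ h₍₁₎)(b ◁ h₍₂₎)`, `1 ◁ h = ε(h)·1`, and `a ◁ (hk) = (a ◁ h) ◁ k`. -/
theorem muAction_module_algebra (α : A →ₗ[ℂ] A ⊗[ℂ] H)
    (hα : IsComoduleAlgebra α)
    (e : (A ⊗[ℂ] A) ≃ₗ[ℂ] (A ⊗[ℂ] H)) (he : e.toLinearMap = canMap α) :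
    (muAction e ∘ₗ TensorProduct.map (LinearMap.mul' ℂ A) LinearMap.id
      = LinearMap.mul' ℂ A ∘ₗ TensorProduct.map (muAction e) (muAction e) ∘ₗ
          (TensorProduct.tensorTensorTensorComm ℂ A A H H).toLinearMap ∘ₗ
          TensorProduct.map LinearMap.id Coalgebra.comul) ∧
    (muAction e ∘ₗ (TensorProduct.mk ℂ A H) 1
      = Algebra.linearMap ℂ A ∘ₗ Coalgebra.counit) ∧
    (muAction e ∘ₗ TensorProduct.map LinearMap.id (LinearMap.mul' ℂ H)
      = muAction e ∘ₗ TensorProduct.map (muAction e) LinearMap.id ∘ₗ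
          (TensorProduct.assoc ℂ A H H).symm.toLinearMap) := by
  refine ⟨?_, ?_, ?_⟩
  · ext a b h
    simp only [LinearMap.coe_comp, Function.comp_apply, TensorProduct.map_tmul,
      LinearMap.id_coe, id_eq, LinearMap.mul'_apply, LinearEquiv.coe_coe,
      TensorProduct.AlgebraTensorModule.curry_apply,
      TensorProduct.curry_apply, LinearMap.coe_restrictScalars]
    rw [muAction_tmul, rhs_lem, eight α hα e he, Theta_star α hα e he]
  · ext h
    simp only [LinearMap.coe_comp, Function.comp_apply, TensorProduct.mk_apply,
      Algebra.linearMap_apply]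
    rw [muAction_tmul, sandwich_one, ← psi_can α hα, can_tau α e he]
    simp [TensorProduct.rid_tmul, Algebra.algebraMap_eq_smul_one]
  · ext a h k
    simp only [LinearMap.coe_comp, Function.comp_apply, TensorProduct.map_tmul,
      LinearMap.id_coe, id_eq, LinearMap.mul'_apply, LinearEquiv.coe_coe,
      TensorProduct.AlgebraTensorModule.curry_apply,
      TensorProduct.curry_apply, LinearMap.coe_restrictScalars,
      TensorProduct.assoc_symm_tmul]
    rw [muAction_tmul, muAction_tmul, muAction_tmul, tau_mul α hα e he, sandwich_W]
end
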